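/- Let n ≥ 1 and let A_n denote the alternating group of even permutations of Fin n. For every λ : Fin n → ℝ, the normalized E-orbit function Ê_λ is an eigenfunction of the Laplace operator on ℝ^n with eigenvalue −4π² ⟨λ, λ⟩: for every x : Fin n → ℝ, ∑_i (d²/dt²)|_{t=0} Ê_λ(x + t • e_i) = −4π² (∑_i (λ i)²) · Ê_λ(x), where e_i is the i-th standard basis vector (Pi.single i 1) and the second derivative is in the real variable t. -/

import Mathlib

/-! Ê_λ is the sum over σ ∈ Aₙ of the plane waves `exp(2πi ⟨σ·λ, x⟩)`. Along each coordinate line a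
plane wave is `t ↦ exp(c + k t)`, so its coordinate Laplacian is `(2πi)² ‖σ·λ‖²` times itself, and
`‖σ·λ‖ = ‖λ‖` because σ only permutes the coordinates. -/

/-- The normalized `E`-orbit function
`Ê_λ(x) = ∑_{σ ∈ Aₙ} exp(2πi ∑ᵢ λ(σ⁻¹ i) · x i)`. -/
noncomputable def Ehat (n : ℕ) (lam x : Fin n → ℝ) : ℂ :=
  ∑ σ : alternatingGroup (Fin n),
    Complex.exp (2 * (Real.pi : ℂ) * Complex.I *
      ((∑ i, lam ((σ : Equiv.Perm (Fin n))⁻¹ i) * x i : ℝ) : ℂ))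

theorem deriv_deriv_fun_sum {𝕜 F ι : Type*} [NontriviallyNormedField 𝕜] [NormedAddCommGroup F]
    [NormedSpace 𝕜 F] {s : Finset ι} {g : ι → 𝕜 → F} (hg : ∀ σ ∈ s, ContDiff 𝕜 2 (g σ)) (t : 𝕜) :
    deriv (deriv fun u => ∑ σ ∈ s, g σ u) t = ∑ σ ∈ s, deriv (deriv (g σ)) t := by
  have hderiv : deriv (fun u => ∑ σ ∈ s, g σ u) = fun u => ∑ σ ∈ s, deriv (g σ) u :=
    funext fun u => deriv_fun_sum fun σ hσ =>
      ((hg σ hσ).differentiable two_ne_zero).differentiableAt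
  rw [hderiv, deriv_fun_sum fun σ hσ => (hg σ hσ).differentiable_deriv_two.differentiableAt]

theorem deriv_deriv_cexp_const_add_mul (c k : ℂ) (t : ℝ) :
    deriv (deriv fun u : ℝ => Complex.exp (c + k * u)) t = k ^ 2 * Complex.exp (c + k * t) := by
  have hasDeriv : ∀ (a : ℂ) (u : ℝ), HasDerivAt (fun u : ℝ => a * Complex.exp (c + k * u))
      (a * k * Complex.exp (c + k * u)) u := fun a u => by
    have hlin : HasDerivAt (fun u : ℝ => c + k * u) k u := by
      simpa using ((hasDerivAt_id u).ofReal_comp.const_mul k).const_add c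
    exact (hlin.cexp.const_mul a).congr_deriv (by ring)
  have hfirst : deriv (fun u : ℝ => Complex.exp (c + k * u)) =
      fun u : ℝ => k * Complex.exp (c + k * u) :=
    funext fun u => by simpa using (hasDeriv 1 u).deriv
  rw [hfirst, (hasDeriv k t).deriv, sq]

section coordinates
variable {ι : Type*} [Fintype ι]

noncomputable def coordLaplacian [DecidableEq ι] (f : (ι → ℝ) → ℂ) (x : ι → ℝ) : ℂ :=
  ∑ i, deriv (deriv fun t : ℝ => f (x + t • (Pi.single i 1 : ι → ℝ))) 0

theorem coordLaplacian_fun_sum {κ : Type*} [DecidableEq ι] [Fintype κ]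
    {f : κ → (ι → ℝ) → ℂ} (hf : ∀ σ, ContDiff ℝ 2 (f σ)) (x : ι → ℝ) :
    coordLaplacian (fun y => ∑ σ, f σ y) x = ∑ σ, coordLaplacian (f σ) x := by
  unfold coordLaplacian
  rw [Finset.sum_comm]
  refine Finset.sum_congr rfl fun i _ => deriv_deriv_fun_sum (fun σ _ => ?_) 0
  exact (hf σ).comp (by fun_prop)

noncomputable def planeWave (μ x : ι → ℝ) : ℂ :=
  Complex.exp (2 * (Real.pi : ℂ) * Complex.I * ((∑ i, μ i * x i : ℝ) : ℂ))

theorem contDiff_planeWave (μ : ι → ℝ) {n : WithTop ℕ∞} : ContDiff ℝ n (planeWave μ) := by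
  unfold planeWave
  exact (contDiff_const.mul (Complex.ofRealCLM.contDiff.comp
    (ContDiff.sum fun i _ => by fun_prop))).cexp

theorem planeWave_add_smul_single [DecidableEq ι] (μ x : ι → ℝ) (i : ι) (t : ℝ) :
    planeWave μ (x + t • Pi.single i 1) =
      Complex.exp (2 * Real.pi * Complex.I * ((∑ j, μ j * x j : ℝ) : ℂ)
        + 2 * Real.pi * Complex.I * μ i * t) := by
  simp only [planeWave, Pi.add_apply, Pi.smul_apply, smul_eq_mul, mul_add, Finset.sum_add_distrib,
    Pi.single_apply, mul_ite, mul_one, mul_zero, Finset.sum_ite_eq', Finset.mem_univ, if_true]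
  push_cast
  ring_nf

theorem coordLaplacian_planeWave [DecidableEq ι] (μ x : ι → ℝ) :
    coordLaplacian (planeWave μ) x =
      -4 * (Real.pi : ℂ) ^ 2 * ((∑ i, μ i ^ 2 : ℝ) : ℂ) * planeWave μ x := by
  simp only [coordLaplacian, planeWave_add_smul_single, deriv_deriv_cexp_const_add_mul]
  simp only [Complex.ofReal_zero, mul_zero, add_zero, ← Finset.sum_mul, planeWave]
  congr 1
  push_cast
  rw [Finset.mul_sum]
  refine Finset.sum_congr rfl fun i _ => ?_
  ring_nf
  rw [Complex.I_sq]
  ring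

end coordinates

theorem Ehat_eq_sum_planeWave (n : ℕ) (lam : Fin n → ℝ) :
    Ehat n lam = fun x =>
      ∑ σ : alternatingGroup (Fin n), planeWave (lam ∘ ⇑(σ : Equiv.Perm (Fin n))⁻¹) x :=
  rfl

theorem Ehat_laplacian (n : ℕ) (lam x : Fin n → ℝ) :
    ∑ i : Fin n,
        deriv (deriv (fun t : ℝ => Ehat n lam (x + t • (Pi.single i 1 : Fin n → ℝ)))) 0 =
      -4 * (Real.pi : ℂ) ^ 2 * ((∑ i, (lam i) ^ 2 : ℝ) : ℂ) * Ehat n lam x := by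
  change coordLaplacian (Ehat n lam) x = _
  have hnorm : ∀ σ : Equiv.Perm (Fin n), ∑ i, (lam ∘ ⇑σ⁻¹) i ^ 2 = ∑ i, lam i ^ 2 :=
    fun σ => Equiv.sum_comp σ⁻¹ (fun i => lam i ^ 2)
  rw [Ehat_eq_sum_planeWave, coordLaplacian_fun_sum (fun σ => contDiff_planeWave _)]
  simp only [coordLaplacian_planeWave, hnorm, ← Finset.mul_sum]
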